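/- Let σ_1, σ_2 ∈ Σ_{r^m}* with the concatenation σ_2·σ_1 nonempty, let σ ∈ Σ_{r^m}* be a nonempty word, and let k ∈ ℕ. Then ξ(σ_2·σ^k·σ_1) = a_k·ξ(σ_2·σ_1) + b_k·Γ_{σ_1}^{-1}(ξ(σ)), where a_k = (r^{|σ_2·σ_1|} − 1)/(r^{|σ_2·σ_1| + k·|σ|} − 1) and b_k = r^{|σ_2·σ_1|}·(r^{k·|σ|} − 1)/(r^{|σ_2·σ_1| + k·|σ|} − 1), and σ^k denotes the k-fold concatenation of σ. -/

import Mathlib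

/-- The alphabet `Σ_{r^m}` of digit vectors. -/
abbrev Alpha (r m : ℕ) := Fin m → Fin r
abbrev Word (r m : ℕ) := List (Alpha r m)

/-- `ρ(b₁⋯bₙ) = Σᵢ r^(i-1)·bᵢ` (least significant digit first), viewed in `ℝ^m`. -/
noncomputable def rho (r m : ℕ) : Word r m → (Fin m → ℝ)
  | [] => 0
  | b :: w => (fun j => (b j : ℝ)) + (r : ℝ) • rho r m w

/-- `Γ_σ(x) = r^|σ|·x + ρ(σ)`. -/
noncomputable def Gam (r m : ℕ) (σ : Word r m) (x : Fin m → ℝ) : Fin m → ℝ :=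
  (r : ℝ) ^ σ.length • x + rho r m σ

/-- The inverse bijection `Γ_σ⁻¹(y) = (y - ρ(σ))/r^|σ|`. -/
noncomputable def GamInv (r m : ℕ) (σ : Word r m) (y : Fin m → ℝ) : Fin m → ℝ :=
  ((r : ℝ) ^ σ.length)⁻¹ • (y - rho r m σ)

/-- `ξ(σ) = ρ(σ)/(1 - r^|σ|)` (meaningful for nonempty `σ`). -/
noncomputable def xi (r m : ℕ) (σ : Word r m) : Fin m → ℝ :=
  (1 - (r : ℝ) ^ σ.length)⁻¹ • rho r m σ

/-- `ρ(L) = {ρ(σ) : σ ∈ L}`. -/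
def rhoSet (r m : ℕ) (L : Set (Word r m)) : Set (Fin m → ℝ) :=
  {x | ∃ σ ∈ L, x = rho r m σ}

/-- `ξ(L) = {ξ(σ) : σ ∈ L, σ ≠ ε}`. -/
def xiSet (r m : ℕ) (L : Set (Word r m)) : Set (Fin m → ℝ) :=
  {x | ∃ σ ∈ L, σ ≠ [] ∧ x = xi r m σ}

/-- Kleene star of a language. -/
def kstar' {α : Type*} (L : Set (List α)) : Set (List α) :=
  {w | ∃ ws : List (List α), (∀ u ∈ ws, u ∈ L) ∧ w = ws.flatten}

/-- Concatenation of two languages. -/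
def catL {α : Type*} (A B : Set (List α)) : Set (List α) :=
  {w | ∃ a ∈ A, ∃ b ∈ B, w = a ++ b}

/-- `chainLang σ Ls n = σ_{n+1}·(L_n)*·σ_n ⋯ (L_1)*·σ_1`. -/
def chainLang {α : Type*} (σ : ℕ → List α) (Ls : ℕ → Set (List α)) : ℕ → Set (List α)
  | 0 => {σ 1}
  | n + 1 => catL {σ (n + 2)} (catL (kstar' (Ls (n + 1))) (chainLang σ Ls n))

/-- `catDown σ hi lo = σ_hi·σ_{hi-1}⋯σ_lo` (empty if `lo > hi`). -/
def catDown {α : Type*} (σ : ℕ → List α) (hi lo : ℕ) : List α :=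
  ((List.range (hi + 1 - lo)).map fun j => σ (hi - j)).flatten

/-- `catUp σ k = σ_1·σ_2⋯σ_k`. -/
def catUp {α : Type*} (σ : ℕ → List α) (k : ℕ) : List α :=
  ((List.range k).map fun j => σ (j + 1)).flatten

/-- `σ^k`, the `k`-fold concatenation of `σ`. -/
def repK {α : Type*} (σ : List α) (k : ℕ) : List α := (List.replicate k σ).flatten

/-- `ℝ₋·X = {t·x : t ≤ 0, x ∈ X}`. -/
def negSmul {m : ℕ} (X : Set (Fin m → ℝ)) : Set (Fin m → ℝ) :=
  {y | ∃ t : ℝ, t ≤ 0 ∧ ∃ x ∈ X, y = t • x}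

/-- The cone `C(R)` generated by a finite set of rays. -/
def coneOf {m : ℕ} (R : Finset ((Fin m → ℝ) × ℝ)) : Set ((Fin m → ℝ) × ℝ) :=
  {y | ∃ t : ((Fin m → ℝ) × ℝ) → ℝ, (∀ p, 0 ≤ t p) ∧ y = ∑ p ∈ R, t p • p}

/-- The polyhedral convex set `P(R) = {x : (x,1) ∈ C(R)}`. -/
def polyOf {m : ℕ} (R : Finset ((Fin m → ℝ) × ℝ)) : Set (Fin m → ℝ) :=
  {x | (x, (1 : ℝ)) ∈ coneOf R}


/-! Since `ρ(uv) = ρ(u) + r^|u|·ρ(v)`, both sides are explicit linear combinations of `ρ(σ₂)`,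
`ρ(σ^k)` and `ρ(σ₁)`, and the identity reduces to one of rational functions in `r`. The word
`σ^k` may then be replaced by `σ`: `ξ(σ^k) = ξ(σ)`, as both are the fixed point of
`Γ_{σ^k} = Γ_σ^k`. -/

section Words

variable {r m : ℕ}

theorem rho_append (u v : Word r m) :
    rho r m (u ++ v) = rho r m u + (r : ℝ) ^ u.length • rho r m v := by
  induction u with
  | nil => simp [rho]
  | cons b u ih =>
    simp only [List.cons_append, rho, ih, List.length_cons, pow_succ, smul_add, mul_comm _ (r : ℝ),
      mul_smul, add_assoc]

@[simp]
theorem length_repK {α : Type*} (σ : List α) (k : ℕ) : (repK σ k).length = k * σ.length := by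
  simp [repK]

theorem rho_repK (σ : Word r m) (k : ℕ) :
    rho r m (repK σ k) = (∑ i ∈ Finset.range k, ((r : ℝ) ^ σ.length) ^ i) • rho r m σ := by
  induction k with
  | zero => simp [repK, rho]
  | succ k ih =>
    have hsplit : repK σ (k + 1) = σ ++ repK σ k := by simp [repK, List.replicate_succ]
    rw [hsplit, rho_append, ih, smul_smul, geom_sum_succ, add_smul, one_smul, add_comm]

theorem one_lt_pow_length (hr : 1 < r) {w : Word r m} (hw : w ≠ []) : 1 < (r : ℝ) ^ w.length :=
  one_lt_pow₀ (by exact_mod_cast hr) (List.length_pos_iff.mpr hw).ne'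

theorem xi_repK (hr : 1 < r) {σ : Word r m} (hσ : σ ≠ []) {k : ℕ} (hk : k ≠ 0) :
    xi r m (repK σ k) = xi r m σ := by
  have hpow := one_lt_pow_length hr hσ
  have hpowk : 1 < ((r : ℝ) ^ σ.length) ^ k := one_lt_pow₀ hpow hk
  rw [xi, xi, rho_repK, geom_sum_eq hpow.ne', smul_smul, length_repK, mul_comm k, pow_mul]
  congr 1
  field_simp [sub_ne_zero.mpr hpow.ne, sub_ne_zero.mpr hpowk.ne, sub_ne_zero.mpr hpow.ne',
    sub_ne_zero.mpr hpowk.ne']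
  ring

theorem xi_append_append (hr : 1 < r) {σ₁ σ₂ w : Word r m} (h₂₁ : σ₂ ++ σ₁ ≠ [])
    (hw : w ≠ []) :
    xi r m (σ₂ ++ w ++ σ₁) =
      (((r : ℝ) ^ (σ₂ ++ σ₁).length - 1) /
          ((r : ℝ) ^ ((σ₂ ++ σ₁).length + w.length) - 1)) • xi r m (σ₂ ++ σ₁) +
      ((r : ℝ) ^ (σ₂ ++ σ₁).length * ((r : ℝ) ^ w.length - 1) /
          ((r : ℝ) ^ ((σ₂ ++ σ₁).length + w.length) - 1)) •
        GamInv r m σ₁ (xi r m w) := by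
  have h₂₁' := one_lt_pow_length hr h₂₁
  have hw' := one_lt_pow_length hr hw
  have hall := one_lt_pow_length hr (w := σ₂ ++ w ++ σ₁) (by simp [hw])
  simp only [List.length_append, pow_add] at h₂₁' hall ⊢
  simp only [xi, GamInv, rho_append, List.length_append, pow_add]
  match_scalars <;> field_simp [sub_ne_zero.mpr h₂₁'.ne, sub_ne_zero.mpr h₂₁'.ne',
    sub_ne_zero.mpr hw'.ne, sub_ne_zero.mpr hw'.ne', sub_ne_zero.mpr hall.ne,
    sub_ne_zero.mpr hall.ne'] <;> ring

end Words

theorem xi_middle_power_general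
    (r m : ℕ) (hr : 2 ≤ r)
    (σ₁ σ₂ σ : Word r m) (h₂₁ : σ₂ ++ σ₁ ≠ []) (hσ : σ ≠ []) (k : ℕ) :
    xi r m (σ₂ ++ repK σ k ++ σ₁) =
      (((r : ℝ) ^ (σ₂ ++ σ₁).length - 1) /
          ((r : ℝ) ^ ((σ₂ ++ σ₁).length + k * σ.length) - 1)) • xi r m (σ₂ ++ σ₁) +
      ((r : ℝ) ^ (σ₂ ++ σ₁).length * ((r : ℝ) ^ (k * σ.length) - 1) /
          ((r : ℝ) ^ ((σ₂ ++ σ₁).length + k * σ.length) - 1)) •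
        GamInv r m σ₁ (xi r m σ) := by
  rcases Nat.eq_zero_or_pos k with rfl | hk
  · have hN := sub_ne_zero.mpr (one_lt_pow_length (by omega) h₂₁).ne'
    simp only [List.length_append] at hN
    simp [repK, div_self hN]
  · have hrep : repK σ k ≠ [] := by
      rw [← List.length_pos_iff, length_repK]; exact Nat.mul_pos hk (List.length_pos_iff.mpr hσ)
    rw [xi_append_append hr h₂₁ hrep, length_repK, xi_repK hr hσ hk.ne']

/-- the key identity expressing `ξ(σ₂·σ^k·σ₁)` as a combination of
`ξ(σ₂·σ₁)` and `Γ_{σ₁}⁻¹(ξ(σ))`. -/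
theorem xi_middle_power
    (r m : ℕ) (hr : 2 ≤ r) (hm : 1 ≤ m)
    (σ₁ σ₂ σ : Word r m) (h₂₁ : σ₂ ++ σ₁ ≠ []) (hσ : σ ≠ []) (k : ℕ) :
    xi r m (σ₂ ++ repK σ k ++ σ₁) =
      (((r : ℝ) ^ (σ₂ ++ σ₁).length - 1) /
          ((r : ℝ) ^ ((σ₂ ++ σ₁).length + k * σ.length) - 1)) • xi r m (σ₂ ++ σ₁) +
      ((r : ℝ) ^ (σ₂ ++ σ₁).length * ((r : ℝ) ^ (k * σ.length) - 1) /
          ((r : ℝ) ^ ((σ₂ ++ σ₁).length + k * σ.length) - 1)) •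
        GamInv r m σ₁ (xi r m σ) :=
  xi_middle_power_general r m hr σ₁ σ₂ σ h₂₁ hσ k
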